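/- arXiv:2205.11674 — 5 statements merged into one kernel-verified Lean document; each statement's English description precedes it below -/
import Mathlib

section
/- If a topological space X is countably α-compact, then every locally finite family of nonempty subsets of X is finite. -/
def AlphaOpen {X : Type*} [TopologicalSpace X] (A : Set X) : Prop :=
  A ⊆ interior (closure (interior A))

def AlphaClosed {X : Type*} [TopologicalSpace X] (A : Set X) : Prop :=
  AlphaOpen Aᶜ

def AlphaContinuous {X Y : Type*} [TopologicalSpace X] [TopologicalSpace Y]
    (f : X → Y) : Prop :=
  ∀ V : Set Y, IsOpen V → AlphaOpen (f ⁻¹' V)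

def CountablyAlphaCompact (X : Type*) [TopologicalSpace X] : Prop :=
  ∀ U : ℕ → Set X, (∀ n, AlphaOpen (U n)) → (⋃ n, U n) = Set.univ →
    ∃ t : Finset ℕ, (⋃ n ∈ t, U n) = Set.univ

def AlphaCompact (X : Type*) [TopologicalSpace X] : Prop :=
  ∀ 𝒰 : Set (Set X), (∀ A ∈ 𝒰, AlphaOpen A) → ⋃₀ 𝒰 = Set.univ →
    ∃ 𝒱 ⊆ 𝒰, 𝒱.Finite ∧ ⋃₀ 𝒱 = Set.univ

def CountablyCompact (X : Type*) [TopologicalSpace X] : Prop :=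
  ∀ U : ℕ → Set X, (∀ n, IsOpen (U n)) → (⋃ n, U n) = Set.univ →
    ∃ t : Finset ℕ, (⋃ n ∈ t, U n) = Set.univ

open Set Filter

theorem IsOpen.alphaOpen {X : Type*} [TopologicalSpace X] {A : Set X} (hA : IsOpen A) :
    AlphaOpen A := by
  rw [AlphaOpen, hA.interior_eq]
  exact interior_maximal subset_closure hA

theorem CountablyAlphaCompact.countablyCompactSpace {X : Type*} [TopologicalSpace X]
    (h : CountablyAlphaCompact X) : CountablyCompactSpace X where
  isCountablyCompact_univ := isCountablyCompact_iff_countable_open_cover.2 fun U hU hcover =>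
    (h U (fun n => (hU n).alphaOpen) (univ_subset_iff.1 hcover)).imp fun _ ht => ht.ge

/-- A point in each of infinitely many members of a locally finite family gives a sequence
without cluster points. -/
theorem LocallyFinite.finite_nonempty_of_countablyCompactSpace {ι X : Type*}
    [TopologicalSpace X] [CountablyCompactSpace X] {f : ι → Set X} (hf : LocallyFinite f) :
    {i | (f i).Nonempty}.Finite := by
  by_contra hinf
  let e := Set.Infinite.natEmbedding _ hinf
  choose x hx using fun n => (e n).2
  have hpoints : LocallyFinite fun n => ({x n} : Set X) :=
    (hf.comp_injective (Subtype.val_injective.comp e.injective)).subset fun n =>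
      singleton_subset_iff.2 (hx n)
  obtain ⟨y, -, hy⟩ :=
    CountablyCompactSpace.isCountablyCompact_univ.seq_clusterPt x (.of_forall fun _ => trivial)
  obtain ⟨U, hU, hUfin⟩ := hpoints y
  refine Nat.frequently_atTop_iff_infinite.1 (hy.frequently hU) (hUfin.subset ?_)
  exact fun n hn => ⟨x n, rfl, hn⟩

theorem LocallyFinite.finite_of_countablyCompactSpace {ι X : Type*} [TopologicalSpace X]
    [CountablyCompactSpace X] {f : ι → Set X} (hf : LocallyFinite f)
    (hne : ∀ i, (f i).Nonempty) : Finite ι := by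
  simpa only [hne, ofPred_true, finite_univ_iff] using hf.finite_nonempty_of_countablyCompactSpace

theorem stmt9 {X : Type*} [TopologicalSpace X] (h : CountablyAlphaCompact X)
    (S : Set (Set X)) (hne : ∀ s ∈ S, s.Nonempty)
    (hlf : LocallyFinite (fun s : S => (s : Set X))) : S.Finite :=
  have := h.countablyCompactSpace
  finite_coe_iff.1 (hlf.finite_of_countablyCompactSpace fun s => hne s s.2)
end

section
/- The topological sum (disjoint union) ⊕_{β∈Γ} X_β of nonempty spaces is countably α-compact if and only if Γ is finite and each X_β is countably α-compact. -/
lemma alphaOpen_of_isOpen {X : Type*} [TopologicalSpace X] {A : Set X}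
    (h : IsOpen A) : AlphaOpen A := by
  have h1 : A ⊆ closure (interior A) := by
    rw [h.interior_eq]; exact subset_closure
  exact interior_maximal h1 h

lemma alphaOpen_sigma_preimage {Γ : Type*} {X : Γ → Type*}
    [∀ β, TopologicalSpace (X β)] {A : Set (Σ β, X β)} (hA : AlphaOpen A) (β : Γ) :
    AlphaOpen (Sigma.mk β ⁻¹' A) := by
  intro x hx
  have := hA hx
  rwa [← isOpenMap_sigmaMk.preimage_interior_eq_interior_preimage continuous_sigmaMk,
    ← isOpenMap_sigmaMk.preimage_closure_eq_closure_preimage continuous_sigmaMk,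
    ← isOpenMap_sigmaMk.preimage_interior_eq_interior_preimage continuous_sigmaMk]

lemma alphaOpen_sigma_of_fibers {Γ : Type*} {X : Γ → Type*}
    [∀ β, TopologicalSpace (X β)] {A : Set (Σ β, X β)}
    (h : ∀ β, AlphaOpen (Sigma.mk β ⁻¹' A)) : AlphaOpen A := by
  rintro ⟨β, x⟩ hx
  have := h β hx
  rw [← isOpenMap_sigmaMk.preimage_interior_eq_interior_preimage continuous_sigmaMk,
    ← isOpenMap_sigmaMk.preimage_closure_eq_closure_preimage continuous_sigmaMk,
    ← isOpenMap_sigmaMk.preimage_interior_eq_interior_preimage continuous_sigmaMk] at this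
  exact this

theorem stmt11 {Γ : Type*} (X : Γ → Type*) [∀ β, TopologicalSpace (X β)]
    (hne : ∀ β, Nonempty (X β)) :
    CountablyAlphaCompact (Σ β, X β) ↔
      (Finite Γ ∧ ∀ β, CountablyAlphaCompact (X β)) := by
  constructor
  · intro H
    constructor
    · -- Γ is finite
      by_contra hinf
      have : Infinite Γ := not_finite_iff_infinite.mp hinf
      let e := Infinite.natEmbedding Γ
      -- cover: U n = fibers over (e '' {k ≤ n}) ∪ (range e)ᶜ
      set T : ℕ → Set Γ := fun n => (e '' {k | k ≤ n}) ∪ (Set.range e)ᶜ with hT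
      set U : ℕ → Set (Σ β, X β) := fun n => Sigma.fst ⁻¹' T n with hU
      have hopen : ∀ n, IsOpen (U n) := by
        intro n
        rw [isOpen_sigma_iff]
        intro β
        by_cases hβ : β ∈ T n
        · convert isOpen_univ
          ext x; simpa [hU] using hβ
        · convert isOpen_empty
          ext x; simpa [hU] using hβ
      have hcov : (⋃ n, U n) = Set.univ := by
        ext ⟨β, x⟩
        simp only [Set.mem_iUnion, Set.mem_univ, iff_true]
        by_cases hβ : β ∈ Set.range e
        · obtain ⟨k, rfl⟩ := hβ
          exact ⟨k, Or.inl ⟨k, le_refl k, rfl⟩⟩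
        · exact ⟨0, Or.inr hβ⟩
      obtain ⟨t, ht⟩ := H U (fun n => alphaOpen_of_isOpen (hopen n)) hcov
      -- the point over e (t.sup id + 1) is not covered
      obtain ⟨x⟩ := hne (e (t.sup id + 1))
      have := ht ▸ Set.mem_univ (⟨e (t.sup id + 1), x⟩ : Σ β, X β)
      rw [ht] at this
      have hmem : (⟨e (t.sup id + 1), x⟩ : Σ β, X β) ∈ ⋃ n ∈ t, U n := by
        rw [ht]; trivial
      simp only [Set.mem_iUnion] at hmem
      obtain ⟨n, hn, hmem⟩ := hmem
      rcases hmem with ⟨k, hk, hek⟩ | hnr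
      · have h1 : t.sup id + 1 = k := e.injective hek.symm
        have h2 : k ≤ n := hk
        have h3 : n ≤ t.sup id := Finset.le_sup (f := id) hn
        omega
      · exact hnr (Set.mem_range_self _)
    · -- each X β is countably α-compact
      intro β V hV hVcov
      set U : ℕ → Set (Σ γ, X γ) := fun n => (Sigma.mk β '' (V n)ᶜ)ᶜ with hU
      have hfib1 : ∀ n, Sigma.mk β ⁻¹' U n = V n := by
        intro n
        simp [hU, Set.preimage_compl, Set.preimage_image_eq _ sigma_mk_injective]
      have hfib2 : ∀ n γ, γ ≠ β → Sigma.mk γ ⁻¹' U n = Set.univ := by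
        intro n γ h
        ext x
        simp only [hU, Set.preimage_compl, Set.mem_compl_iff, Set.mem_preimage,
          Set.mem_image, Set.mem_univ, iff_true]
        rintro ⟨y, _, hy⟩
        exact h (congrArg Sigma.fst hy).symm
      have hUα : ∀ n, AlphaOpen (U n) := by
        intro n
        apply alphaOpen_sigma_of_fibers
        intro γ
        by_cases h : γ = β
        · subst h; rw [hfib1]; exact hV n
        · rw [hfib2 n γ h]; exact alphaOpen_of_isOpen isOpen_univ
      have hUcov : (⋃ n, U n) = Set.univ := by
        ext ⟨γ, x⟩
        simp only [Set.mem_iUnion, Set.mem_univ, iff_true]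
        by_cases h : γ = β
        · subst h
          have hx : x ∈ ⋃ n, V n := hVcov ▸ Set.mem_univ x
          simp only [Set.mem_iUnion] at hx
          obtain ⟨n, hn⟩ := hx
          exact ⟨n, show x ∈ Sigma.mk γ ⁻¹' U n from (hfib1 n).symm ▸ hn⟩
        · exact ⟨0, show x ∈ Sigma.mk γ ⁻¹' U 0 from (hfib2 0 γ h).symm ▸ Set.mem_univ x⟩
      obtain ⟨t, ht⟩ := H U hUα hUcov
      refine ⟨t, ?_⟩
      ext x
      simp only [Set.mem_iUnion, Set.mem_univ, iff_true]
      have hx : (⟨β, x⟩ : Σ γ, X γ) ∈ ⋃ n ∈ t, U n := ht ▸ Set.mem_univ _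
      simp only [Set.mem_iUnion] at hx
      obtain ⟨n, hn, hmem⟩ := hx
      exact ⟨n, hn, (hfib1 n) ▸ (show x ∈ Sigma.mk β ⁻¹' U n from hmem)⟩
  · rintro ⟨hfin, hcc⟩ U hUα hUcov
    have : Fintype Γ := Fintype.ofFinite Γ
    -- for each β get a finite subcover of the fibers
    have key : ∀ β : Γ, ∃ t : Finset ℕ, (⋃ n ∈ t, Sigma.mk β ⁻¹' U n) = Set.univ := by
      intro β
      apply hcc β
      · exact fun n => alphaOpen_sigma_preimage (hUα n) β
      · ext x
        simp only [Set.mem_iUnion, Set.mem_univ, iff_true]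
        have : (⟨β, x⟩ : Σ γ, X γ) ∈ ⋃ n, U n := hUcov ▸ Set.mem_univ _
        simpa using this
    choose t ht using key
    refine ⟨Finset.univ.biUnion t, ?_⟩
    ext ⟨β, x⟩
    simp only [Set.mem_iUnion, Set.mem_univ, iff_true, Finset.mem_biUnion, Finset.mem_univ,
      true_and]
    have : x ∈ ⋃ n ∈ t β, Sigma.mk β ⁻¹' U n := (ht β) ▸ Set.mem_univ _
    simp only [Set.mem_iUnion] at this
    obtain ⟨n, hn, hmem⟩ := this
    exact ⟨n, ⟨β, hn⟩, hmem⟩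
end

section
/- If f : X → ℝ is α-continuous and X is countably α-compact, then f is bounded. -/
namespace CountablyAlphaCompact

variable {X : Type*} [TopologicalSpace X]

theorem exists_eq_univ_of_monotone (hX : CountablyAlphaCompact X) {U : ℕ → Set X}
    (hU : Monotone U) (hUα : ∀ n, AlphaOpen (U n)) (hcov : (⋃ n, U n) = Set.univ) :
    ∃ N, U N = Set.univ := by
  obtain ⟨t, ht⟩ := hX U hUα hcov
  refine ⟨t.sup id, Set.eq_univ_of_univ_subset ?_⟩
  rw [← ht]
  exact Set.iUnion₂_subset fun n hn => hU (Finset.le_sup (f := id) hn)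

theorem exists_dist_le_of_alphaContinuous {E : Type*} [PseudoMetricSpace E]
    (hX : CountablyAlphaCompact X) {f : X → E} (hf : AlphaContinuous f) (y₀ : E) :
    ∃ C : ℝ, ∀ x, dist (f x) y₀ ≤ C := by
  obtain ⟨N, hN⟩ := hX.exists_eq_univ_of_monotone (U := fun n : ℕ => f ⁻¹' Metric.ball y₀ n)
    (fun m n hmn => Set.preimage_mono (Metric.ball_subset_ball (by exact_mod_cast hmn)))
    (fun n => hf _ Metric.isOpen_ball)
    (Set.eq_univ_of_forall fun x => Set.mem_iUnion.2 (exists_nat_gt (dist (f x) y₀)))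
  exact ⟨N, fun x => (Set.eq_univ_iff_forall.1 hN x : dist (f x) y₀ < N).le⟩

end CountablyAlphaCompact

theorem stmt12 {X : Type*} [TopologicalSpace X] (f : X → ℝ)
    (hf : AlphaContinuous f) (hX : CountablyAlphaCompact X) :
    ∃ C : ℝ, ∀ x, |f x| ≤ C := by
  simpa only [Real.dist_0_eq_abs] using hX.exists_dist_le_of_alphaContinuous hf 0
end

section
/- Every α-continuous function between topological spaces where the domain is countably α-compact has countably compact image; in particular, the α-continuous image of a countably α-compact space is countably compact. -/
def CountablyCompactIn {Y : Type*} [TopologicalSpace Y] (K : Set Y) : Prop :=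
  ∀ U : ℕ → Set Y, (∀ n, IsOpen (U n)) → K ⊆ ⋃ n, U n →
    ∃ t : Finset ℕ, K ⊆ ⋃ n ∈ t, U n

theorem AlphaContinuous.countablyCompactIn_range {X Y : Type*} [TopologicalSpace X]
    [TopologicalSpace Y] {f : X → Y} (hf : AlphaContinuous f) (hX : CountablyAlphaCompact X) :
    CountablyCompactIn (Set.range f) := by
  intro U hU hcover
  obtain ⟨t, ht⟩ := hX (fun n => f ⁻¹' U n) (fun n => hf _ (hU n))
    (by rw [← Set.preimage_iUnion, Set.preimage_eq_univ_iff]; exact hcover)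
  exact ⟨t, Set.preimage_eq_univ_iff.1 (by rwa [Set.preimage_iUnion₂])⟩

theorem CountablyCompactIn.countablyCompact_of_univ {Y : Type*} [TopologicalSpace Y]
    (h : CountablyCompactIn (Set.univ : Set Y)) : CountablyCompact Y := fun U hU hcover =>
  (h U hU hcover.ge).imp fun _ ht => Set.univ_subset_iff.1 ht

theorem stmt13 {X Y : Type*} [TopologicalSpace X] [TopologicalSpace Y]
    (f : X → Y) (hf : AlphaContinuous f) (hX : CountablyAlphaCompact X) :
    CountablyCompactIn (Set.range f) ∧
      (Function.Surjective f → CountablyCompact Y) := by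
  have hrange := hf.countablyCompactIn_range hX
  exact ⟨hrange, fun hsurj => (hsurj.range_eq ▸ hrange).countablyCompact_of_univ⟩
end

section
/- If U₁ ⊇ U₂ ⊇ ⋯ is a decreasing sequence of nonempty open subsets of a topological space X in which every locally finite family of nonempty open sets is finite, then ⋂_{i∈ℕ} cl(U_i) ≠ ∅. -/
/-
Suppose `⋂ i, cl (U i)` is empty. A point outside `cl (U n)` has a neighbourhood missing every
`U i` with `i ≥ n`, so the chain `U` is locally finite, and by hypothesis it takes only finitely
many values. A finite chain has a least member `U m`, contained in every `U i`, so the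
intersection contains `U m ≠ ∅` after all.
-/

theorem Antitone.exists_forall_le_of_finite_range {ι α : Type*} [Preorder ι]
    [IsDirectedOrder ι] [Nonempty ι] [Preorder α] {f : ι → α} (hf : Antitone f)
    (hfin : (Set.range f).Finite) : ∃ m, ∀ i, f m ≤ f i := by
  obtain ⟨m, -, hmin⟩ :=
    Set.Finite.exists_minimalFor' f Set.univ (by rwa [Set.image_univ]) Set.univ_nonempty
  refine ⟨m, fun i => ?_⟩
  obtain ⟨k, hmk, hik⟩ := exists_ge_ge m i
  exact (hmin trivial (hf hmk)).trans (hf hik)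

theorem Antitone.locallyFinite_of_iInter_closure_eq_empty {ι X : Type*} [LinearOrder ι]
    [LocallyFiniteOrderBot ι] [TopologicalSpace X] {f : ι → Set X} (hf : Antitone f)
    (h : ⋂ i, closure (f i) = ∅) : LocallyFinite f := by
  intro x
  obtain ⟨n, hxn⟩ : ∃ n, x ∉ closure (f n) := by
    simpa using Set.eq_empty_iff_forall_notMem.mp h x
  refine ⟨(closure (f n))ᶜ, isClosed_closure.isOpen_compl.mem_nhds hxn,
    (Set.finite_Iio n).subset fun i hi => ?_⟩
  by_contra hni
  obtain ⟨y, hyi, hyn⟩ := hi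
  exact hyn (subset_closure (hf (not_lt.mp hni) hyi))

theorem stmt18 {X : Type*} [TopologicalSpace X]
    (hX : ∀ S : Set (Set X), (∀ s ∈ S, IsOpen s ∧ s.Nonempty) →
      LocallyFinite (fun s : S => (s : Set X)) → S.Finite)
    (U : ℕ → Set X) (hopen : ∀ i, IsOpen (U i)) (hne : ∀ i, (U i).Nonempty)
    (hdec : Antitone U) : (⋂ i, closure (U i)).Nonempty := by
  by_contra! hempty
  have hlf := (hdec.locallyFinite_of_iInter_closure_eq_empty hempty).on_range
  have hfin := hX _ (by rintro _ ⟨i, rfl⟩; exact ⟨hopen i, hne i⟩) hlf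
  obtain ⟨m, hm⟩ := hdec.exists_forall_le_of_finite_range hfin
  obtain ⟨x, hx⟩ := hne m
  have hxmem : x ∈ ⋂ i, closure (U i) := Set.mem_iInter.2 fun i => subset_closure (hm i hx)
  exact Set.notMem_empty x (hempty ▸ hxmem)
end
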